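/- arXiv:1908.05766 — 5 statements merged into one kernel-verified Lean document; each statement's English description precedes it below -/
import Mathlib

section
/- Let T>0 and let u : ℝ → ℝ³ → ℝ³ be continuous, C² in the space variable, with u, ∂ₓu and ∂ₓ²u continuous and bounded on [0,T]×ℝ³. Then for every x₀ ∈ ℝ³, every ξ₀ ∈ ℝ³ with ξ₀ ≠ 0, and every b₀ ∈ ℝ³, there exists a unique triple of differentiable curves γ,ξ,b : [0,T] → ℝ³ with γ(0)=x₀, ξ(0)=ξ₀, b(0)=b₀, such that ξ(t) ≠ 0 for all t ∈ [0,T] and (γ,ξ,b) satisfies the bicharacteristic-amplitude system along u on [0,T]. -/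
/-!
The trajectory `γ` solves an ODE whose field is bounded and uniformly Lipschitz, so the
Picard–Lindelöf theorem applies on a whole time interval. Along `γ`, the equations for `ξ` and
`b` are linear, `ξ' = -(∂ₓu)† ξ` and `b' = -(I - 2 ξξᵀ/|ξ|²) (∂ₓu) b`, with coefficients
continuous in time, and linear equations are solvable on every compact interval. Uniqueness
(Grönwall) for the linear equation of `ξ` shows that `ξ` never vanishes, since otherwise it would
coincide with the zero solution; this is what makes the coefficient of the `b`-equation continuous.
Uniqueness for the whole system is again Grönwall, one equation after the other.
-/

noncomputable section

open MeasureTheory Set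
open scoped RealInnerProductSpace ENNReal

abbrev E3 := EuclideanSpace ℝ (Fin 3)

/-- The `i`-th standard basis vector of `ℝ³`. -/
def e3 (i : Fin 3) : E3 := EuclideanSpace.single i 1

/-- The spatial partial derivative `∂ⱼ fᵢ (x)`. -/
def pd3 (f : E3 → E3) (j i : Fin 3) (x : E3) : ℝ := fderiv ℝ f x (e3 j) i

/-- The curl of a vector field on `ℝ³`. -/
def curl3 (f : E3 → E3) (x : E3) : E3 :=
  (WithLp.equiv 2 (Fin 3 → ℝ)).symm
    ![pd3 f 1 2 x - pd3 f 2 1 x, pd3 f 2 0 x - pd3 f 0 2 x, pd3 f 0 1 x - pd3 f 1 0 x]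

/-- The divergence of a vector field on `ℝ³`. -/
def div3 (f : E3 → E3) (x : E3) : ℝ := ∑ i, pd3 f i i x

/-- The transpose of the spatial Jacobian of `f` at `x`, applied to `ξ`:
`(∂ₓf(x))ᵀ ξ`, where `(∂ₓf)_{ij} = ∂ⱼfᵢ`. -/
def jacT (f : E3 → E3) (x ξ : E3) : E3 :=
  (WithLp.equiv 2 (Fin 3 → ℝ)).symm (fun i => ⟪ξ, fderiv ℝ f x (e3 i)⟫)

/-- The cross product on `ℝ³`. -/
def cross3 (a b : E3) : E3 :=
  (WithLp.equiv 2 (Fin 3 → ℝ)).symm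
    ![a 1 * b 2 - a 2 * b 1, a 2 * b 0 - a 0 * b 2, a 0 * b 1 - a 1 * b 0]

/-- `(u, P)` is a solution of the incompressible Euler equation on `[0,T] × ℝ³`:
`u` is C¹ in time and C² in space, `u` and its first and second spatial derivatives are
continuous and bounded on `[0,T] × ℝ³`, and `∂ₜu + (u·∇)u + ∇P = 0`, `div u = 0` hold
pointwise on `[0,T] × ℝ³`. -/
structure IsEulerSolutionOn (u : ℝ → E3 → E3) (P : ℝ → E3 → ℝ) (T : ℝ) : Prop where
  u_time_C1 : ∀ x, ContDiff ℝ 1 fun t => u t x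
  u_space_C2 : ∀ t, ContDiff ℝ 2 (u t)
  cont_u : Continuous fun q : ℝ × E3 => u q.1 q.2
  cont_du : Continuous fun q : ℝ × E3 => fderiv ℝ (u q.1) q.2
  cont_d2u : Continuous fun q : ℝ × E3 => fderiv ℝ (fderiv ℝ (u q.1)) q.2
  bdd : ∃ C : ℝ, ∀ t ∈ Icc 0 T, ∀ x : E3, ‖u t x‖ ≤ C ∧ ‖fderiv ℝ (u t) x‖ ≤ C ∧
      ‖fderiv ℝ (fderiv ℝ (u t)) x‖ ≤ C
  P_space_C1 : ∀ t, ContDiff ℝ 1 (P t)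
  momentum : ∀ t ∈ Icc 0 T, ∀ x : E3,
      deriv (fun s => u s x) t + fderiv ℝ (u t) x (u t x) + gradient (P t) x = 0
  incompressible : ∀ t ∈ Icc 0 T, ∀ x : E3, div3 (u t) x = 0

/-- `(v, P')` is a solution of the linearization of the Euler equation about `u`
on `[0,T] × ℝ³`: `v` is C¹, `P'` is C¹ in space, and
`∂ₜv + (u·∇)v + (v·∇)u + ∇P' = 0`, `div v = 0` hold pointwise on `[0,T] × ℝ³`. -/
structure IsLinEulerSolutionOn (u v : ℝ → E3 → E3) (P' : ℝ → E3 → ℝ) (T : ℝ) : Prop where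
  v_C1 : ContDiff ℝ 1 fun q : ℝ × E3 => v q.1 q.2
  P'_space_C1 : ∀ t, ContDiff ℝ 1 (P' t)
  momentum : ∀ t ∈ Icc 0 T, ∀ x : E3,
      deriv (fun s => v s x) t + fderiv ℝ (v t) x (u t x) + fderiv ℝ (u t) x (v t x)
        + gradient (P' t) x = 0
  incompressible : ∀ t ∈ Icc 0 T, ∀ x : E3, div3 (v t) x = 0

/-- `(γ, ξ, b)` is a solution of the bicharacteristic-amplitude system along `u` on `[0,T]`:
`ξ(t) ≠ 0`, `γ' = u(t,γ)`, `ξ' = −(∂ₓu)ᵀξ`, and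
`b' = −(∂ₓu)b + 2 (⟨ξ, (∂ₓu)b⟩/|ξ|²) ξ` along `γ`. -/
structure IsBicharSolution (u : ℝ → E3 → E3) (T : ℝ) (γ ξ b : ℝ → E3) : Prop where
  xi_ne : ∀ t ∈ Icc 0 T, ξ t ≠ 0
  hgamma : ∀ t ∈ Icc 0 T, HasDerivAt γ (u t (γ t)) t
  hxi : ∀ t ∈ Icc 0 T, HasDerivAt ξ (-jacT (u t) (γ t) (ξ t)) t
  hb : ∀ t ∈ Icc 0 T, HasDerivAt b
      (-(fderiv ℝ (u t) (γ t) (b t)) +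
        (2 * ⟪ξ t, fderiv ℝ (u t) (γ t) (b t)⟫ / ‖ξ t‖ ^ 2) • ξ t) t


open scoped NNReal Topology InnerProduct

section ODE

variable {E : Type*} [NormedAddCommGroup E] [NormedSpace ℝ E]

def ballRetraction (M : ℝ) (x : E) : E := (M / max M ‖x‖) • x

theorem ballRetraction_of_norm_le {M : ℝ} (hM : 0 < M) {x : E} (hx : ‖x‖ ≤ M) :
    ballRetraction M x = x := by
  rw [ballRetraction, max_eq_left hx, div_self hM.ne', one_smul]

theorem norm_ballRetraction {M : ℝ} (hM : 0 < M) (x : E) :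
    ‖ballRetraction M x‖ = min M ‖x‖ := by
  have hmax : 0 < max M ‖x‖ := hM.trans_le (le_max_left _ _)
  rw [ballRetraction, norm_smul, Real.norm_of_nonneg (by positivity), div_mul_eq_mul_div,
    div_eq_iff hmax.ne', min_mul_max]

theorem lipschitzWith_ballRetraction {M : ℝ} (hM : 0 < M) :
    LipschitzWith 2 (ballRetraction M : E → E) := by
  refine LipschitzWith.of_dist_le_mul fun x y => ?_
  wlog hxy : ‖x‖ ≤ ‖y‖ generalizing x y
  · rw [dist_comm, dist_comm x]; exact this y x (le_of_not_ge hxy)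
  rw [dist_eq_norm, dist_eq_norm]
  set m := max M ‖x‖
  set n := max M ‖y‖
  have hm : 0 < m := hM.trans_le (le_max_left _ _)
  have hn : 0 < n := hM.trans_le (le_max_left _ _)
  have hmn : m ≤ n := max_le_max le_rfl hxy
  have hnm : n - m ≤ ‖x - y‖ := by
    have := abs_max_sub_max_le_abs ‖y‖ ‖x‖ M
    rw [max_comm ‖y‖, max_comm ‖x‖] at this
    linarith [le_abs_self (n - m), abs_norm_sub_norm_le y x, norm_sub_rev y x]
  have hsplit : ballRetraction M x - ballRetraction M y =
      (M / m - M / n) • x + (M / n) • (x - y) := by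
    simp only [ballRetraction, smul_sub, sub_smul]; abel
  have hradial : (M / m - M / n) * ‖x‖ ≤ n - m := by
    rw [div_sub_div _ _ hm.ne' hn.ne', div_mul_eq_mul_div, div_le_iff₀ (by positivity)]
    have hxm : ‖x‖ ≤ m := le_max_right _ _
    have hMn : M ≤ n := le_max_left _ _
    nlinarith [mul_le_mul hMn hxm (norm_nonneg _) hn.le, sub_nonneg.2 hmn]
  have hdiff : 0 ≤ M / m - M / n := sub_nonneg.2 (div_le_div_of_nonneg_left hM.le hm hmn)
  calc ‖ballRetraction M x - ballRetraction M y‖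
      ≤ (M / m - M / n) * ‖x‖ + M / n * ‖x - y‖ := by
        rw [hsplit]
        refine (norm_add_le _ _).trans_eq ?_
        rw [norm_smul, norm_smul, Real.norm_of_nonneg hdiff, Real.norm_of_nonneg (by positivity)]
    _ ≤ ‖x - y‖ + 1 * ‖x - y‖ := by
        gcongr
        exacts [hradial.trans hnm, (div_le_one hn).2 (le_max_left _ _)]
    _ = (2 : ℝ≥0) * ‖x - y‖ := by push_cast; ring

theorem norm_le_mul_exp_of_norm_deriv_le_right {f f' : ℝ → E} {K a b t₀ : ℝ}
    (ht₀ : t₀ ∈ Icc a b) (hf : ∀ t ∈ Icc a b, HasDerivWithinAt f (f' t) (Icc a b) t)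
    (hbound : ∀ t ∈ Icc a b, ‖f' t‖ ≤ K * ‖f t‖) {t : ℝ} (ht : t ∈ Icc t₀ b) :
    ‖f t‖ ≤ ‖f t₀‖ * Real.exp (K * (t - t₀)) := by
  have hsub : Icc t₀ b ⊆ Icc a b := Icc_subset_Icc_left ht₀.1
  have := norm_le_gronwallBound_of_norm_deriv_right_le (ε := 0) (δ := ‖f t₀‖)
    (fun s hs => (hf s (hsub hs)).continuousWithinAt.mono hsub)
    (fun s hs => (hf s (hsub (Ico_subset_Icc_self hs))).mono_of_mem_nhdsWithin
      (Icc_mem_nhdsGE_of_mem ⟨ht₀.1.trans hs.1, hs.2⟩))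
    le_rfl (fun s hs => by simpa using hbound s (hsub (Ico_subset_Icc_self hs))) t ht
  rwa [gronwallBound_ε0] at this

theorem norm_le_mul_exp_abs_of_norm_deriv_le {f f' : ℝ → E} {K a b t₀ : ℝ}
    (ht₀ : t₀ ∈ Icc a b) (hf : ∀ t ∈ Icc a b, HasDerivWithinAt f (f' t) (Icc a b) t)
    (hbound : ∀ t ∈ Icc a b, ‖f' t‖ ≤ K * ‖f t‖) {t : ℝ} (ht : t ∈ Icc a b) :
    ‖f t‖ ≤ ‖f t₀‖ * Real.exp (K * |t - t₀|) := by
  rcases le_total t₀ t with h | h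
  · rw [abs_of_nonneg (sub_nonneg.2 h)]
    exact norm_le_mul_exp_of_norm_deriv_le_right ht₀ hf hbound ⟨h, ht.2⟩
  have hneg : MapsTo Neg.neg (Icc (-b) (-a)) (Icc a b) :=
    fun s hs => ⟨le_neg.mp hs.2, neg_le.mp hs.1⟩
  have := norm_le_mul_exp_of_norm_deriv_le_right (f := f ∘ Neg.neg) (f' := fun s => -f' (-s))
    (K := K) (t₀ := -t₀) ⟨neg_le_neg ht₀.2, neg_le_neg ht₀.1⟩
    (fun s hs => by
      simpa using (hf (-s) (hneg hs)).scomp s (hasDerivAt_neg s).hasDerivWithinAt hneg)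
    (fun s hs => by simpa using hbound (-s) (hneg hs)) (t := -t)
    ⟨neg_le_neg h, neg_le_neg ht.1⟩
  rw [abs_of_nonpos (sub_nonpos.2 h), neg_sub]
  simpa [neg_add_eq_sub] using this

theorem eqOn_Icc_of_hasDerivWithinAt {v : ℝ → E → E} {K : ℝ≥0} {f g : ℝ → E} {a b t₀ : ℝ}
    (hv : ∀ t ∈ Icc a b, LipschitzWith K (v t)) (ht₀ : t₀ ∈ Icc a b)
    (hf : ∀ t ∈ Icc a b, HasDerivWithinAt f (v t (f t)) (Icc a b) t)
    (hg : ∀ t ∈ Icc a b, HasDerivWithinAt g (v t (g t)) (Icc a b) t) (heq : f t₀ = g t₀) :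
    EqOn f g (Icc a b) := by
  have hcont {h : ℝ → E} (hh : ∀ t ∈ Icc a b, HasDerivWithinAt h (v t (h t)) (Icc a b) t)
      {s : Set ℝ} (hs : s ⊆ Icc a b) : ContinuousOn h s :=
    fun t ht => (hh t (hs ht)).continuousWithinAt.mono hs
  rw [← Icc_union_Icc_eq_Icc ht₀.1 ht₀.2]
  refine EqOn.union ?_ ?_
  · have hs : Icc a t₀ ⊆ Icc a b := Icc_subset_Icc_right ht₀.2
    have hderiv {h : ℝ → E} (hh : ∀ t ∈ Icc a b, HasDerivWithinAt h (v t (h t)) (Icc a b) t)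
        (t : ℝ) (ht : t ∈ Ioc a t₀) : HasDerivWithinAt h (v t (h t)) (Iic t) t :=
      (hh t (hs (Ioc_subset_Icc_self ht))).mono_of_mem_nhdsWithin
        (Icc_mem_nhdsLE_of_mem ⟨ht.1, ht.2.trans ht₀.2⟩)
    exact ODE_solution_unique_of_mem_Icc_left (s := fun _ => univ)
      (fun t ht => (hv t (hs (Ioc_subset_Icc_self ht))).lipschitzOnWith) (hcont hf hs)
      (hderiv hf) (fun _ _ => mem_univ _) (hcont hg hs) (hderiv hg) (fun _ _ => mem_univ _) heq
  · have hs : Icc t₀ b ⊆ Icc a b := Icc_subset_Icc_left ht₀.1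
    have hderiv {h : ℝ → E} (hh : ∀ t ∈ Icc a b, HasDerivWithinAt h (v t (h t)) (Icc a b) t)
        (t : ℝ) (ht : t ∈ Ico t₀ b) : HasDerivWithinAt h (v t (h t)) (Ici t) t :=
      (hh t (hs (Ico_subset_Icc_self ht))).mono_of_mem_nhdsWithin
        (Icc_mem_nhdsGE_of_mem ⟨ht₀.1.trans ht.1, ht.2⟩)
    exact ODE_solution_unique_of_mem_Icc_right (s := fun _ => univ)
      (fun t ht => (hv t (hs (Ico_subset_Icc_self ht))).lipschitzOnWith) (hcont hf hs)
      (hderiv hf) (fun _ _ => mem_univ _) (hcont hg hs) (hderiv hg) (fun _ _ => mem_univ _) heq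

theorem exists_forall_norm_le_of_continuousOn_Icc {A : ℝ → E →L[ℝ] E} {a b : ℝ}
    (hA : ContinuousOn A (Icc a b)) : ∃ K : ℝ≥0, ∀ t ∈ Icc a b, ‖A t‖ ≤ K := by
  obtain ⟨C, hC⟩ := isCompact_Icc.exists_bound_of_continuousOn hA
  exact ⟨C.toNNReal, fun t ht => (hC t ht).trans (Real.le_coe_toNNReal C)⟩

theorem eqOn_Icc_of_hasDerivWithinAt_clm_apply {A : ℝ → E →L[ℝ] E} {f g : ℝ → E} {a b t₀ : ℝ}
    (hA : ContinuousOn A (Icc a b)) (ht₀ : t₀ ∈ Icc a b)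
    (hf : ∀ t ∈ Icc a b, HasDerivWithinAt f (A t (f t)) (Icc a b) t)
    (hg : ∀ t ∈ Icc a b, HasDerivWithinAt g (A t (g t)) (Icc a b) t) (heq : f t₀ = g t₀) :
    EqOn f g (Icc a b) := by
  obtain ⟨K, hK⟩ := exists_forall_norm_le_of_continuousOn_Icc hA
  exact eqOn_Icc_of_hasDerivWithinAt (v := fun t => A t) (K := K)
    (fun t ht => (A t).lipschitz.weaken (by exact_mod_cast hK t ht)) ht₀ hf hg heq

theorem ne_zero_of_hasDerivWithinAt_clm_apply {A : ℝ → E →L[ℝ] E} {f : ℝ → E} {a b t₀ : ℝ}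
    (hA : ContinuousOn A (Icc a b)) (ht₀ : t₀ ∈ Icc a b)
    (hf : ∀ t ∈ Icc a b, HasDerivWithinAt f (A t (f t)) (Icc a b) t) (hf₀ : f t₀ ≠ 0)
    {t : ℝ} (ht : t ∈ Icc a b) : f t ≠ 0 := fun hft =>
  hf₀ <| eqOn_Icc_of_hasDerivWithinAt_clm_apply (g := fun _ => 0) hA ht hf
    (fun s _ => by simpa using hasDerivWithinAt_const s (Icc a b) (0 : E)) hft ht₀

variable [CompleteSpace E]

theorem exists_forall_hasDerivWithinAt_of_lipschitzWith_of_norm_le {F : ℝ → E → E}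
    {a b t₀ L : ℝ} {K : ℝ≥0} (ht₀ : t₀ ∈ Icc a b)
    (hlip : ∀ t ∈ Icc a b, LipschitzWith K (F t))
    (hcont : ∀ x, ContinuousOn (F · x) (Icc a b))
    (hbound : ∀ t ∈ Icc a b, ∀ x, ‖F t x‖ ≤ L) (x₀ : E) :
    ∃ f : ℝ → E, f t₀ = x₀ ∧ ∀ t ∈ Icc a b, HasDerivWithinAt f (F t (f t)) (Icc a b) t := by
  have hL : 0 ≤ L := (norm_nonneg _).trans (hbound t₀ ht₀ x₀)
  have hab : 0 ≤ b - a := by linarith [ht₀.1, ht₀.2]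
  have hpl : IsPicardLindelof F (tmin := a) (tmax := b) ⟨t₀, ht₀⟩ x₀
      ⟨L * (b - a), by positivity⟩ 0 ⟨L, hL⟩ K :=
    { lipschitzOnWith := fun t ht => (hlip t ht).lipschitzOnWith
      continuousOn := fun x _ => hcont x
      norm_le := fun t ht x _ => hbound t ht x
      mul_max_le := by
        simp only [NNReal.coe_zero, sub_zero]
        exact mul_le_mul_of_nonneg_left (max_le (by linarith [ht₀.1]) (by linarith [ht₀.2])) hL }
  exact hpl.exists_eq_forall_mem_Icc_hasDerivWithinAt₀

/-- The field is truncated outside a ball which, by Grönwall's inequality, the solution of the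
truncated equation never leaves. -/
theorem exists_forall_hasDerivWithinAt_clm_apply {A : ℝ → E →L[ℝ] E} {a b t₀ : ℝ}
    (ht₀ : t₀ ∈ Icc a b) (hA : ContinuousOn A (Icc a b)) (x₀ : E) :
    ∃ f : ℝ → E, f t₀ = x₀ ∧ ∀ t ∈ Icc a b, HasDerivWithinAt f (A t (f t)) (Icc a b) t := by
  obtain ⟨K, hK⟩ := exists_forall_norm_le_of_continuousOn_Icc hA
  set M := ‖x₀‖ * Real.exp (K * (b - a)) + 1
  have hM : 0 < M := by positivity
  have hAle : ∀ t ∈ Icc a b, ∀ x, ‖A t x‖ ≤ K * ‖x‖ := fun t ht x =>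
    (A t).le_of_opNorm_le (hK t ht) x
  obtain ⟨f, hf₀, hf⟩ := exists_forall_hasDerivWithinAt_of_lipschitzWith_of_norm_le
    (F := fun t x => A t (ballRetraction M x)) (K := K * 2) (L := K * M) ht₀
    (fun t ht => ((A t).lipschitz.weaken (by exact_mod_cast hK t ht)).comp
      (lipschitzWith_ballRetraction hM))
    (fun x => hA.clm_apply continuousOn_const)
    (fun t ht x => (hAle t ht _).trans (by
      gcongr; exact (norm_ballRetraction hM x).trans_le (min_le_left _ _)))
    x₀
  have hfM : ∀ t ∈ Icc a b, ‖f t‖ ≤ M := fun t ht => by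
    have := norm_le_mul_exp_abs_of_norm_deriv_le ht₀ hf (fun s hs => (hAle s hs _).trans (by
      gcongr; exact (norm_ballRetraction hM _).trans_le (min_le_right _ _))) ht
    have htt₀ : |t - t₀| ≤ b - a :=
      abs_sub_le_iff.2 ⟨by linarith [ht.2, ht₀.1], by linarith [ht.1, ht₀.2]⟩
    calc ‖f t‖ ≤ ‖x₀‖ * Real.exp (K * |t - t₀|) := hf₀ ▸ this
      _ ≤ ‖x₀‖ * Real.exp (K * (b - a)) := by gcongr
      _ ≤ M := le_add_of_nonneg_right zero_le_one
  refine ⟨f, hf₀, fun t ht => ?_⟩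
  simpa only [ballRetraction_of_norm_le hM (hfM t ht)] using hf t ht

end ODE

section InnerProductSpace

variable {F : Type*} [NormedAddCommGroup F] [InnerProductSpace ℝ F]

def amplitudeOp (D : F →L[ℝ] F) (ξ : F) : F →L[ℝ] F :=
  -D + (2 / ‖ξ‖ ^ 2) • (innerSL ℝ ξ ∘L D).smulRight ξ

theorem amplitudeOp_apply (D : F →L[ℝ] F) (ξ w : F) :
    amplitudeOp D ξ w = -(D w) + (2 * ⟪ξ, D w⟫ / ‖ξ‖ ^ 2) • ξ := by
  simp [amplitudeOp, smul_smul, div_mul_eq_mul_div]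

theorem ContinuousOn.amplitudeOp {s : Set ℝ} {D : ℝ → F →L[ℝ] F} {ξ : ℝ → F}
    (hD : ContinuousOn D s) (hξ : ContinuousOn ξ s) (hξ₀ : ∀ t ∈ s, ξ t ≠ 0) :
    ContinuousOn (fun t => amplitudeOp (D t) (ξ t)) s := by
  have hξ₀' : ∀ t ∈ s, ‖ξ t‖ ^ 2 ≠ 0 := fun t ht => pow_ne_zero 2 (norm_ne_zero_iff.2 (hξ₀ t ht))
  have hr : ContinuousOn (fun t => (innerSL ℝ (ξ t) ∘L D t).smulRight (ξ t)) s :=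
    (ContinuousLinearMap.smulRightL ℝ F F).continuous₂.comp_continuousOn
      ((by fun_prop : ContinuousOn (fun t => innerSL ℝ (ξ t) ∘L D t) s).prodMk hξ)
  unfold _root_.amplitudeOp
  fun_prop (disch := assumption)

theorem ContinuousOn.neg_adjoint [CompleteSpace F] {s : Set ℝ} {D : ℝ → F →L[ℝ] F}
    (hD : ContinuousOn D s) : ContinuousOn (fun t => -(D t)†) s :=
  (ContinuousLinearMap.adjoint.continuous.comp_continuousOn hD).neg

end InnerProductSpace

theorem jacT_eq_adjoint (f : E3 → E3) (x ξ : E3) : jacT f x ξ = ((fderiv ℝ f x)†) ξ := by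
  ext i
  calc ⟪ξ, fderiv ℝ f x (e3 i)⟫ = ⟪e3 i, ((fderiv ℝ f x)†) ξ⟫ := by
        rw [ContinuousLinearMap.adjoint_inner_right, real_inner_comm]
    _ = _ := by simp [e3, EuclideanSpace.inner_single_left]

theorem exists_isBicharSolution {u : ℝ → E3 → E3} {T C : ℝ} {K : ℝ≥0} (hT : 0 ≤ T)
    (cont_u : Continuous fun q : ℝ × E3 => u q.1 q.2)
    (cont_du : Continuous fun q : ℝ × E3 => fderiv ℝ (u q.1) q.2)
    (hlip : ∀ t ∈ Icc 0 T, LipschitzWith K (u t)) (hbound : ∀ t ∈ Icc 0 T, ∀ x, ‖u t x‖ ≤ C)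
    (x₀ ξ₀ b₀ : E3) (hξ₀ : ξ₀ ≠ 0) :
    ∃ γ ξ b : ℝ → E3, γ 0 = x₀ ∧ ξ 0 = ξ₀ ∧ b 0 = b₀ ∧ IsBicharSolution u T γ ξ b := by
  -- freezing `u` outside `[0, T]` lets us solve on a neighbourhood `I` of `[0, T]`
  set τ : ℝ → ℝ := fun t => projIcc 0 T hT t
  have hτ : Continuous τ := continuous_subtype_val.comp continuous_projIcc
  have hτ_mem (t : ℝ) : τ t ∈ Icc 0 T := (projIcc 0 T hT t).2
  have hτ_eq {t : ℝ} (ht : t ∈ Icc 0 T) : τ t = t := congrArg Subtype.val (projIcc_of_mem hT ht)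
  set I := Icc (-1 : ℝ) (T + 1)
  have h0 : (0 : ℝ) ∈ I := ⟨by norm_num, by linarith⟩
  have hI {t : ℝ} (ht : t ∈ Icc 0 T) : t ∈ I := ⟨by linarith [ht.1], by linarith [ht.2]⟩
  have hInhds {t : ℝ} (ht : t ∈ Icc 0 T) : I ∈ 𝓝 t :=
    Icc_mem_nhds (by linarith [ht.1]) (by linarith [ht.2])
  obtain ⟨γ, hγ₀, hγ⟩ := exists_forall_hasDerivWithinAt_of_lipschitzWith_of_norm_le
    (F := fun t => u (τ t)) h0 (fun t _ => hlip _ (hτ_mem t))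
    (fun x => (cont_u.comp (hτ.prodMk continuous_const)).continuousOn)
    (fun t _ => hbound _ (hτ_mem t)) x₀
  set D : ℝ → E3 →L[ℝ] E3 := fun t => fderiv ℝ (u (τ t)) (γ t)
  have hD : ContinuousOn D I := cont_du.comp_continuousOn
    (hτ.continuousOn.prodMk fun t ht => (hγ t ht).continuousWithinAt)
  obtain ⟨ξ, hξ₀', hξ⟩ := exists_forall_hasDerivWithinAt_clm_apply h0 hD.neg_adjoint ξ₀
  have hξne {t : ℝ} (ht : t ∈ I) : ξ t ≠ 0 :=
    ne_zero_of_hasDerivWithinAt_clm_apply hD.neg_adjoint h0 hξ (hξ₀' ▸ hξ₀) ht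
  obtain ⟨b, hb₀, hb⟩ := exists_forall_hasDerivWithinAt_clm_apply h0
    (hD.amplitudeOp (fun t ht => (hξ t ht).continuousWithinAt) fun t ht => hξne ht) b₀
  refine ⟨γ, ξ, b, hγ₀, hξ₀', hb₀, fun t ht => hξne (hI ht), fun t ht => ?_, fun t ht => ?_,
    fun t ht => ?_⟩
  · simpa [hτ_eq ht] using (hγ t (hI ht)).hasDerivAt (hInhds ht)
  · simpa [jacT_eq_adjoint, D, hτ_eq ht] using (hξ t (hI ht)).hasDerivAt (hInhds ht)
  · simpa [amplitudeOp_apply, D, hτ_eq ht] using (hb t (hI ht)).hasDerivAt (hInhds ht)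

theorem IsBicharSolution.eqOn {u : ℝ → E3 → E3} {T : ℝ} {K : ℝ≥0} {γ ξ b γ' ξ' b' : ℝ → E3}
    (hT : 0 ≤ T) (cont_du : Continuous fun q : ℝ × E3 => fderiv ℝ (u q.1) q.2)
    (hlip : ∀ t ∈ Icc 0 T, LipschitzWith K (u t))
    (h : IsBicharSolution u T γ ξ b) (h' : IsBicharSolution u T γ' ξ' b')
    (hγ₀ : γ 0 = γ' 0) (hξ₀ : ξ 0 = ξ' 0) (hb₀ : b 0 = b' 0) :
    EqOn γ γ' (Icc 0 T) ∧ EqOn ξ ξ' (Icc 0 T) ∧ EqOn b b' (Icc 0 T) := by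
  have h0 : (0 : ℝ) ∈ Icc 0 T := left_mem_Icc.2 hT
  have hγγ' : EqOn γ γ' (Icc 0 T) := eqOn_Icc_of_hasDerivWithinAt hlip h0
    (fun t ht => (h.hgamma t ht).hasDerivWithinAt) (fun t ht => (h'.hgamma t ht).hasDerivWithinAt)
    hγ₀
  set D : ℝ → E3 →L[ℝ] E3 := fun t => fderiv ℝ (u t) (γ t)
  have hD : ContinuousOn D (Icc 0 T) := cont_du.comp_continuousOn
    (continuousOn_id.prodMk fun t ht => (h.hgamma t ht).continuousAt.continuousWithinAt)
  have hξξ' : EqOn ξ ξ' (Icc 0 T) := eqOn_Icc_of_hasDerivWithinAt_clm_apply hD.neg_adjoint h0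
    (fun t ht => by simpa [jacT_eq_adjoint, D] using (h.hxi t ht).hasDerivWithinAt)
    (fun t ht => by simpa [jacT_eq_adjoint, D, hγγ' ht] using (h'.hxi t ht).hasDerivWithinAt) hξ₀
  have hbb' : EqOn b b' (Icc 0 T) := eqOn_Icc_of_hasDerivWithinAt_clm_apply
    (hD.amplitudeOp (fun t ht => (h.hxi t ht).continuousAt.continuousWithinAt) h.xi_ne) h0
    (fun t ht => by simpa [amplitudeOp_apply, D] using (h.hb t ht).hasDerivWithinAt)
    (fun t ht => by
      simpa [amplitudeOp_apply, D, hγγ' ht, hξξ' ht] using (h'.hb t ht).hasDerivWithinAt) hb₀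
  exact ⟨hγγ', hξξ', hbb'⟩

theorem stmt4_general (T : ℝ) (hT : 0 < T) (u : ℝ → E3 → E3)
    (cont_u : Continuous fun q : ℝ × E3 => u q.1 q.2)
    (u_space_C2 : ∀ t, ContDiff ℝ 2 (u t))
    (cont_du : Continuous fun q : ℝ × E3 => fderiv ℝ (u q.1) q.2)
    (bdd : ∃ C : ℝ, ∀ t ∈ Icc 0 T, ∀ x : E3, ‖u t x‖ ≤ C ∧ ‖fderiv ℝ (u t) x‖ ≤ C ∧
      ‖fderiv ℝ (fderiv ℝ (u t)) x‖ ≤ C)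
    (x₀ ξ₀ b₀ : E3) (hξ₀ : ξ₀ ≠ 0) :
    ∃ γ ξ b : ℝ → E3,
      γ 0 = x₀ ∧ ξ 0 = ξ₀ ∧ b 0 = b₀ ∧
      IsBicharSolution u T γ ξ b ∧
      ∀ γ' ξ' b' : ℝ → E3, γ' 0 = x₀ → ξ' 0 = ξ₀ → b' 0 = b₀ →
        IsBicharSolution u T γ' ξ' b' →
        ∀ t ∈ Icc 0 T, γ' t = γ t ∧ ξ' t = ξ t ∧ b' t = b t := by
  obtain ⟨C, hC⟩ := bdd
  have hlip : ∀ t ∈ Icc 0 T, LipschitzWith C.toNNReal (u t) := fun t ht =>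
    lipschitzWith_of_nnnorm_fderiv_le ((u_space_C2 t).differentiable two_ne_zero) fun x => by
      simpa [← norm_toNNReal] using Real.toNNReal_le_toNNReal (hC t ht x).2.1
  obtain ⟨γ, ξ, b, hγ₀, hξ₀', hb₀, hsol⟩ := exists_isBicharSolution hT.le cont_u cont_du hlip
    (fun t ht x => (hC t ht x).1) x₀ ξ₀ b₀ hξ₀
  refine ⟨γ, ξ, b, hγ₀, hξ₀', hb₀, hsol, fun γ' ξ' b' hγ'₀ hξ'₀ hb'₀ hsol' t ht => ?_⟩
  obtain ⟨hγ, hξ, hb⟩ := hsol'.eqOn hT.le cont_du hlip hsol (hγ'₀.trans hγ₀.symm)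
    (hξ'₀.trans hξ₀'.symm) (hb'₀.trans hb₀.symm)
  exact ⟨hγ ht, hξ ht, hb ht⟩

/-- (Existence and uniqueness for the bicharacteristic-amplitude system.)
If `u` is continuous, C² in space, with `u`, `∂ₓu`, `∂ₓ²u` continuous and bounded on
`[0,T] × ℝ³`, then for all initial data `x₀`, `ξ₀ ≠ 0`, `b₀`, there is a unique solution
`(γ, ξ, b)` of the bicharacteristic-amplitude system along `u` on `[0,T]` with
`γ(0) = x₀`, `ξ(0) = ξ₀`, `b(0) = b₀` (and `ξ(t) ≠ 0` for all `t ∈ [0,T]`). -/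
theorem stmt4 (T : ℝ) (hT : 0 < T) (u : ℝ → E3 → E3)
    (cont_u : Continuous fun q : ℝ × E3 => u q.1 q.2)
    (u_space_C2 : ∀ t, ContDiff ℝ 2 (u t))
    (cont_du : Continuous fun q : ℝ × E3 => fderiv ℝ (u q.1) q.2)
    (cont_d2u : Continuous fun q : ℝ × E3 => fderiv ℝ (fderiv ℝ (u q.1)) q.2)
    (bdd : ∃ C : ℝ, ∀ t ∈ Icc 0 T, ∀ x : E3, ‖u t x‖ ≤ C ∧ ‖fderiv ℝ (u t) x‖ ≤ C ∧
      ‖fderiv ℝ (fderiv ℝ (u t)) x‖ ≤ C)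
    (x₀ ξ₀ b₀ : E3) (hξ₀ : ξ₀ ≠ 0) :
    ∃ γ ξ b : ℝ → E3,
      γ 0 = x₀ ∧ ξ 0 = ξ₀ ∧ b 0 = b₀ ∧
      IsBicharSolution u T γ ξ b ∧
      ∀ γ' ξ' b' : ℝ → E3, γ' 0 = x₀ → ξ' 0 = ξ₀ → b' 0 = b₀ →
        IsBicharSolution u T γ' ξ' b' →
        ∀ t ∈ Icc 0 T, γ' t = γ t ∧ ξ' t = ξ t ∧ b' t = b t :=
  stmt4_general T hT u cont_u u_space_C2 cont_du bdd x₀ ξ₀ b₀ hξ₀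
end
end

section
/- Let T>0 and let u : ℝ → ℝ³ → ℝ³ be continuous and C¹ in the space variable with ∂ₓu continuous on [0,T]×ℝ³. Let (γ,ξ,b) be a solution of the bicharacteristic-amplitude system along u on [0,T] (with ξ(t) ≠ 0 for all t). Then ⟨b(t), ξ(t)⟩ = ⟨b(0), ξ(0)⟩ for all t ∈ [0,T]; in particular, if ⟨b(0),ξ(0)⟩ = 0 then b(t) is orthogonal to ξ(t) for every t ∈ [0,T]. -/
noncomputable section

open MeasureTheory Set
open scoped RealInnerProductSpace ENNReal

/- Along a solution, `d/dt ⟨b, ξ⟩ = -⟨(∂ₓu)b, ξ⟩ + 2⟨ξ, (∂ₓu)b⟩ - ⟨b, (∂ₓu)ᵀξ⟩`, and the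
transpose identity `⟨b, (∂ₓu)ᵀξ⟩ = ⟨ξ, (∂ₓu)b⟩` makes the three terms cancel. -/

lemma sum_smul_e3 (x : E3) : ∑ i, x i • e3 i = x := by
  simpa [e3, EuclideanSpace.basisFun_apply, EuclideanSpace.basisFun_repr] using
    (EuclideanSpace.basisFun (Fin 3) ℝ).sum_repr x

lemma inner_jacT (f : E3 → E3) (x ξ v : E3) :
    ⟪v, jacT f x ξ⟫ = ⟪ξ, fderiv ℝ f x v⟫ := by
  have hv : fderiv ℝ f x v = ∑ i, v i • fderiv ℝ f x (e3 i) := by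
    conv_lhs => rw [← sum_smul_e3 v]
    simp only [map_sum, map_smul]
  rw [hv, inner_sum, jacT, PiLp.inner_apply]
  simp [real_inner_smul_right, mul_comm]

namespace IsBicharSolution

variable {u : ℝ → E3 → E3} {T : ℝ} {γ ξ b : ℝ → E3}

lemma hasDerivAt_inner_zero (hbic : IsBicharSolution u T γ ξ b) {t : ℝ} (ht : t ∈ Icc 0 T) :
    HasDerivAt (fun s => ⟪b s, ξ s⟫) 0 t := by
  refine ((hbic.hb t ht).inner ℝ (hbic.hxi t ht)).congr_deriv ?_
  have hξ : ‖ξ t‖ ^ 2 ≠ 0 := by simpa using hbic.xi_ne t ht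
  rw [inner_neg_right, inner_jacT, inner_add_left, inner_neg_left, real_inner_smul_left,
    real_inner_self_eq_norm_sq, div_mul_cancel₀ _ hξ,
    real_inner_comm (fderiv ℝ (u t) (γ t) (b t)) (ξ t)]
  ring

lemma inner_eq_inner_zero (hbic : IsBicharSolution u T γ ξ b) {t : ℝ} (ht : t ∈ Icc 0 T) :
    ⟪b t, ξ t⟫ = ⟪b 0, ξ 0⟫ :=
  constant_of_has_deriv_right_zero (f := fun s => ⟪b s, ξ s⟫)
    (fun _ hs => (hbic.hasDerivAt_inner_zero hs).continuousAt.continuousWithinAt)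
    (fun _ hs => (hbic.hasDerivAt_inner_zero (Ico_subset_Icc_self hs)).hasDerivWithinAt) t ht

end IsBicharSolution

theorem stmt6_general (T : ℝ) (u : ℝ → E3 → E3)
    (γ ξ b : ℝ → E3) (hbic : IsBicharSolution u T γ ξ b) :
    (∀ t ∈ Icc 0 T, ⟪b t, ξ t⟫ = ⟪b 0, ξ 0⟫) ∧
    (⟪b 0, ξ 0⟫ = 0 → ∀ t ∈ Icc 0 T, ⟪b t, ξ t⟫ = 0) :=
  ⟨fun _ ht => hbic.inner_eq_inner_zero ht,
    fun h0 _ ht => (hbic.inner_eq_inner_zero ht).trans h0⟩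

/-- (Conservation of `⟨b, ξ⟩` — incompressibility in the WKB expansion.)
Along any solution of the bicharacteristic-amplitude system, `⟨b(t), ξ(t)⟩` is constant;
in particular, if `⟨b(0), ξ(0)⟩ = 0` then `b(t) ⊥ ξ(t)` for every `t ∈ [0,T]`. -/
theorem stmt6 (T : ℝ) (hT : 0 < T) (u : ℝ → E3 → E3)
    (cont_u : Continuous fun q : ℝ × E3 => u q.1 q.2)
    (u_space_C1 : ∀ t, ContDiff ℝ 1 (u t))
    (cont_du : Continuous fun q : ℝ × E3 => fderiv ℝ (u q.1) q.2)
    (γ ξ b : ℝ → E3) (hbic : IsBicharSolution u T γ ξ b) :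
    (∀ t ∈ Icc 0 T, ⟪b t, ξ t⟫ = ⟪b 0, ξ 0⟫) ∧
    (⟪b 0, ξ 0⟫ = 0 → ∀ t ∈ Icc 0 T, ⟪b t, ξ t⟫ = 0) :=
  stmt6_general T u γ ξ b hbic
end
end

section
/- Let T>0 and let u : ℝ → ℝ³ → ℝ³ be continuous and C¹ in the space variable with ∂ₓu continuous on [0,T]×ℝ³ and div u(t,x) = 0 for all (t,x) ∈ [0,T]×ℝ³. Let (γ,ξ,b) and (γ,ξ,b̃) be two solutions of the bicharacteristic-amplitude system along u on [0,T] sharing the same curves γ and ξ. Assume the vectors b(0), b̃(0), ξ(0) are linearly independent and ⟨b(0),ξ(0)⟩ = ⟨b̃(0),ξ(0)⟩ = 0. Then ⟨b(t) × b̃(t), ξ(t)⟩ = ⟨b(0) × b̃(0), ξ(0)⟩ for all t ∈ [0,T], i.e. the determinant of the matrix with columns b(t), b̃(t), ξ(t) is constant in time; in particular b(t), b̃(t), ξ(t) remain linearly independent. -/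
noncomputable section

open MeasureTheory Set
open scoped RealInnerProductSpace ENNReal

/-! Write `A = ∂ₓu(t, γ(t))`. The equations make `d/dt ⟨b, ξ⟩` vanish identically, so `b` and
`b̃` stay orthogonal to `ξ`. Differentiating `⟨b × b̃, ξ⟩`, the `ξ`-components of `b'` and `b̃'`
drop out, and the trace identity
`det(Aa, b, c) + det(a, Ab, c) + det(a, b, Ac) = tr A · det(a, b, c)`
with `tr A = div u = 0` leaves `⟨b × b̃, (A − Aᵀ) ξ⟩`. As `b, b̃ ⊥ ξ`, the vector `b × b̃` is
parallel to `ξ`, and `⟨ξ, (A − Aᵀ) ξ⟩ = 0`. -/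

theorem inner_eq_sum_three (x y : E3) : ⟪x, y⟫ = x 0 * y 0 + x 1 * y 1 + x 2 * y 2 := by
  simp only [PiLp.inner_apply, Fin.sum_univ_three, RCLike.inner_apply, conj_trivial]
  ring

theorem eq_sum_smul_e3 (x : E3) : x = x 0 • e3 0 + x 1 • e3 1 + x 2 • e3 2 := by
  ext j; fin_cases j <;> simp [e3]

theorem ContinuousLinearMap.apply_eq_sum_three (A : E3 →L[ℝ] E3) (v : E3) (i : Fin 3) :
    A v i = v 0 * A (e3 0) i + v 1 * A (e3 1) i + v 2 * A (e3 2) i := by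
  conv_lhs => rw [eq_sum_smul_e3 v]
  simp

theorem inner_jacT_left (f : E3 → E3) (x ξ v : E3) : ⟪jacT f x ξ, v⟫ = ⟪ξ, fderiv ℝ f x v⟫ := by
  conv_rhs => rw [eq_sum_smul_e3 v]
  rw [inner_eq_sum_three]
  simp only [jacT, WithLp.equiv_symm_apply, PiLp.toLp_apply, map_add, map_smul, inner_add_right,
    real_inner_smul_right]
  ring

theorem inner_cross3 (a b c : E3) : ⟪cross3 a b, c⟫ =
    (a 1 * b 2 - a 2 * b 1) * c 0 + (a 2 * b 0 - a 0 * b 2) * c 1 +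
      (a 0 * b 1 - a 1 * b 0) * c 2 := by
  simp [inner_eq_sum_three, cross3]

theorem inner_cross3_neg_add_smul_left (a b c : E3) (k : ℝ) :
    ⟪cross3 (-a + k • c) b, c⟫ = -⟪cross3 a b, c⟫ := by
  simp only [inner_cross3, PiLp.add_apply, PiLp.neg_apply, PiLp.smul_apply, smul_eq_mul]
  ring

theorem inner_cross3_neg_add_smul_right (a b c : E3) (k : ℝ) :
    ⟪cross3 a (-b + k • c), c⟫ = -⟪cross3 a b, c⟫ := by
  simp only [inner_cross3, PiLp.add_apply, PiLp.neg_apply, PiLp.smul_apply, smul_eq_mul]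
  ring

theorem inner_cross3_map_add_map_add_map (A : E3 →L[ℝ] E3) (a b c : E3) :
    ⟪cross3 (A a) b, c⟫ + ⟪cross3 a (A b), c⟫ + ⟪cross3 a b, A c⟫ =
      (∑ i, A (e3 i) i) * ⟪cross3 a b, c⟫ := by
  simp only [inner_cross3, Fin.sum_univ_three]
  rw [A.apply_eq_sum_three a 0, A.apply_eq_sum_three a 1, A.apply_eq_sum_three a 2,
    A.apply_eq_sum_three b 0, A.apply_eq_sum_three b 1, A.apply_eq_sum_three b 2,
    A.apply_eq_sum_three c 0, A.apply_eq_sum_three c 1, A.apply_eq_sum_three c 2]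
  ring

theorem norm_sq_smul_cross3 {a b w : E3} (ha : ⟪a, w⟫ = 0) (hb : ⟪b, w⟫ = 0) :
    ‖w‖ ^ 2 • cross3 a b = ⟪cross3 a b, w⟫ • w := by
  rw [← real_inner_self_eq_norm_sq, inner_eq_sum_three w w, inner_cross3]
  rw [inner_eq_sum_three] at ha hb
  ext i
  fin_cases i <;>
    simp only [cross3, WithLp.equiv_symm_apply, PiLp.smul_apply, smul_eq_mul, Fin.isValue,
      Fin.zero_eta, Fin.mk_one, Fin.reduceFinMk, Matrix.cons_val_zero, Matrix.cons_val_one,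
      Matrix.cons_val]
  · linear_combination (w 1 * b 2 - w 2 * b 1) * ha - (w 1 * a 2 - w 2 * a 1) * hb
  · linear_combination (w 2 * b 0 - w 0 * b 2) * ha - (w 2 * a 0 - w 0 * a 2) * hb
  · linear_combination (w 0 * b 1 - w 1 * b 0) * ha - (w 0 * a 1 - w 1 * a 0) * hb

theorem inner_cross3_jacT {a b w : E3} (ha : ⟪a, w⟫ = 0) (hb : ⟪b, w⟫ = 0)
    (f : E3 → E3) (x : E3) :
    ⟪cross3 a b, jacT f x w⟫ = ⟪cross3 a b, fderiv ℝ f x w⟫ := by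
  rcases eq_or_ne w 0 with rfl | hw
  · simp [jacT, inner_eq_sum_three]
  have hw2 : ‖w‖ ^ 2 ≠ 0 := by positivity
  apply mul_left_cancel₀ hw2
  rw [← real_inner_smul_left, ← real_inner_smul_left, norm_sq_smul_cross3 ha hb,
    real_inner_smul_left, real_inner_smul_left, real_inner_comm (jacT f x w), inner_jacT_left]

theorem HasDerivAt.inner_cross3 {a b c : ℝ → E3} {a' b' c' : E3} {t : ℝ}
    (ha : HasDerivAt a a' t) (hb : HasDerivAt b b' t) (hc : HasDerivAt c c' t) :
    HasDerivAt (fun s => ⟪cross3 (a s) (b s), c s⟫)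
      (⟪cross3 a' (b t), c t⟫ + ⟪cross3 (a t) b', c t⟫ + ⟪cross3 (a t) (b t), c'⟫) t := by
  have coord {f : ℝ → E3} {f' : E3} (hf : HasDerivAt f f' t) (i : Fin 3) :
      HasDerivAt (fun s => f s i) (f' i) t :=
    (EuclideanSpace.proj (𝕜 := ℝ) i).hasFDerivAt.comp_hasDerivAt t hf
  have minor (i j : Fin 3) : HasDerivAt (fun s => a s i * b s j - a s j * b s i)
      (a' i * b t j + a t i * b' j - (a' j * b t i + a t j * b' i)) t :=
    ((coord ha i).mul (coord hb j)).sub ((coord ha j).mul (coord hb i))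
  simp only [_root_.inner_cross3]
  exact ((((minor 1 2).mul (coord hc 0)).add ((minor 2 0).mul (coord hc 1))).add
    ((minor 0 1).mul (coord hc 2))).congr_deriv (by ring)

theorem eq_of_hasDerivAt_eq_zero_on_Icc {f : ℝ → ℝ} {a b : ℝ}
    (hf : ∀ t ∈ Icc a b, HasDerivAt f 0 t) : ∀ t ∈ Icc a b, f t = f a :=
  constant_of_has_deriv_right_zero (fun t ht => (hf t ht).continuousAt.continuousWithinAt)
    (fun t ht => (hf t (Ico_subset_Icc_self ht)).hasDerivWithinAt)

theorem linearIndependent_iff_inner_cross3_ne_zero (a b c : E3) :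
    LinearIndependent ℝ ![a, b, c] ↔ ⟪cross3 a b, c⟫ ≠ 0 := by
  let e := WithLp.linearEquiv 2 ℝ (Fin 3 → ℝ)
  have hrows : e.toLinearMap ∘ ![a, b, c] = (Matrix.of ![a.ofLp, b.ofLp, c.ofLp]).row := by
    funext i; fin_cases i <;> rfl
  rw [← e.toLinearMap.linearIndependent_iff e.ker, hrows, Matrix.linearIndependent_rows_iff_isUnit,
    Matrix.isUnit_iff_isUnit_det, isUnit_iff_ne_zero, Matrix.det_fin_three, inner_cross3]
  refine Iff.not (Eq.congr_left ?_)
  simp only [Matrix.of_apply, Matrix.cons_val', Matrix.cons_val_fin_one, Matrix.cons_val_zero,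
    Matrix.cons_val_one, Matrix.cons_val]
  ring

namespace IsBicharSolution

variable {u : ℝ → E3 → E3} {T : ℝ} {γ ξ b c : ℝ → E3}

theorem hasDerivAt_inner (h : IsBicharSolution u T γ ξ b) {t : ℝ} (ht : t ∈ Icc 0 T) :
    HasDerivAt (fun s => ⟪b s, ξ s⟫) 0 t := by
  have hξ : ‖ξ t‖ ^ 2 ≠ 0 := by have := h.xi_ne t ht; positivity
  refine ((h.hb t ht).inner ℝ (h.hxi t ht)).congr_deriv ?_
  rw [inner_neg_right, inner_add_left, inner_neg_left, real_inner_smul_left,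
    real_inner_self_eq_norm_sq, real_inner_comm, inner_jacT_left, div_mul_cancel₀ _ hξ,
    real_inner_comm (ξ t)]
  ring

theorem inner_eq_zero (h : IsBicharSolution u T γ ξ b) (h₀ : ⟪b 0, ξ 0⟫ = 0) :
    ∀ t ∈ Icc 0 T, ⟪b t, ξ t⟫ = 0 := fun t ht =>
  (eq_of_hasDerivAt_eq_zero_on_Icc (fun _ hs => h.hasDerivAt_inner hs) t ht).trans h₀

theorem hasDerivAt_inner_cross3 (hb : IsBicharSolution u T γ ξ b)
    (hc : IsBicharSolution u T γ ξ c) {t : ℝ} (ht : t ∈ Icc 0 T) (hdiv : div3 (u t) (γ t) = 0)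
    (hbξ : ⟪b t, ξ t⟫ = 0) (hcξ : ⟪c t, ξ t⟫ = 0) :
    HasDerivAt (fun s => ⟪cross3 (b s) (c s), ξ s⟫) 0 t := by
  have htrace := inner_cross3_map_add_map_add_map (fderiv ℝ (u t) (γ t)) (b t) (c t) (ξ t)
  rw [show ∑ i, fderiv ℝ (u t) (γ t) (e3 i) i = 0 from hdiv, zero_mul] at htrace
  refine ((hb.hb t ht).inner_cross3 (hc.hb t ht) (hb.hxi t ht)).congr_deriv ?_
  rw [inner_cross3_neg_add_smul_left, inner_cross3_neg_add_smul_right, inner_neg_right,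
    inner_cross3_jacT hbξ hcξ]
  linarith

end IsBicharSolution

theorem stmt7_general (T : ℝ) (u : ℝ → E3 → E3)
    (hdiv : ∀ t ∈ Icc 0 T, ∀ x : E3, div3 (u t) x = 0)
    (γ ξ b btil : ℝ → E3)
    (h1 : IsBicharSolution u T γ ξ b) (h2 : IsBicharSolution u T γ ξ btil)
    (hind : LinearIndependent ℝ ![b 0, btil 0, ξ 0])
    (ho1 : ⟪b 0, ξ 0⟫ = 0) (ho2 : ⟪btil 0, ξ 0⟫ = 0) :
    ∀ t ∈ Icc 0 T,
      ⟪cross3 (b t) (btil t), ξ t⟫ = ⟪cross3 (b 0) (btil 0), ξ 0⟫ ∧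
      LinearIndependent ℝ ![b t, btil t, ξ t] := by
  have hconst : ∀ t ∈ Icc 0 T, ⟪cross3 (b t) (btil t), ξ t⟫ = ⟪cross3 (b 0) (btil 0), ξ 0⟫ :=
    eq_of_hasDerivAt_eq_zero_on_Icc fun t ht => h1.hasDerivAt_inner_cross3 h2 ht
      (hdiv t ht (γ t)) (h1.inner_eq_zero ho1 t ht) (h2.inner_eq_zero ho2 t ht)
  intro t ht
  refine ⟨hconst t ht, ?_⟩
  rw [linearIndependent_iff_inner_cross3_ne_zero, hconst t ht,
    ← linearIndependent_iff_inner_cross3_ne_zero]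
  exact hind

/-- (Conservation of the determinant `det(b, b̃, ξ) = ⟨b × b̃, ξ⟩`.)
For a divergence-free `u` and two solutions `(γ, ξ, b)`, `(γ, ξ, b̃)` of the
bicharacteristic-amplitude system sharing the same `γ` and `ξ`, with `b(0), b̃(0), ξ(0)`
linearly independent and `⟨b(0),ξ(0)⟩ = ⟨b̃(0),ξ(0)⟩ = 0`, the quantity
`⟨b(t) × b̃(t), ξ(t)⟩` is constant on `[0,T]`; in particular `b(t), b̃(t), ξ(t)` remain
linearly independent. -/
theorem stmt7 (T : ℝ) (hT : 0 < T) (u : ℝ → E3 → E3)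
    (cont_u : Continuous fun q : ℝ × E3 => u q.1 q.2)
    (u_space_C1 : ∀ t, ContDiff ℝ 1 (u t))
    (cont_du : Continuous fun q : ℝ × E3 => fderiv ℝ (u q.1) q.2)
    (hdiv : ∀ t ∈ Icc 0 T, ∀ x : E3, div3 (u t) x = 0)
    (γ ξ b btil : ℝ → E3)
    (h1 : IsBicharSolution u T γ ξ b) (h2 : IsBicharSolution u T γ ξ btil)
    (hind : LinearIndependent ℝ ![b 0, btil 0, ξ 0])
    (ho1 : ⟪b 0, ξ 0⟫ = 0) (ho2 : ⟪btil 0, ξ 0⟫ = 0) :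
    ∀ t ∈ Icc 0 T,
      ⟪cross3 (b t) (btil t), ξ t⟫ = ⟪cross3 (b 0) (btil 0), ξ 0⟫ ∧
      LinearIndependent ℝ ![b t, btil t, ξ t] :=
  stmt7_general T u hdiv γ ξ b btil h1 h2 hind ho1 ho2
end
end

section
/- Let T>0, let u : [0,T]×ℝ → ℝ be C¹ and satisfy the Burgers equation ∂ₜu + u ∂ₓu = 0 pointwise on [0,T]×ℝ, with u and ∂ₓu bounded. Let v : [0,T]×ℝ → ℝ be C¹, with v(t,·) compactly supported for each t (uniformly: there is R>0 with v(t,x)=0 for |x|≥R and all t), satisfying the linearized Burgers equation ∂ₜv + ∂ₓ(u v) = 0 pointwise on [0,T]×ℝ. Then the L¹ norm of v is conserved: ∫_ℝ |v(T,x)| dx = ∫_ℝ |v(0,x)| dx. (Hence the L¹ growth ρ_B(T) of the linearized Burgers semigroup equals 1 up to the time of shock formation: solutions remain uniformly stable.) -/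
/-!
Let `η_ε(y) = √(y² + ε²) - ε`, a smooth approximation of `|y|` with `η_ε(0) = 0`.
By the continuity equation,
`∂ₜ η_ε(v) = -∂ₓ(u η_ε(v)) + ∂ₓu (η_ε(v) - v η_ε'(v))`.
Integrated over the support of `v`, the first term is a boundary term that vanishes, and the
second is `O(ε)` because `|η_ε(y) - y η_ε'(y)| ≤ ε`. Hence `∫ η_ε(v(T)) - ∫ η_ε(v(0)) = O(ε)`,
while `∫ η_ε(v(t))` is within `O(ε)` of `∫ |v(t)|`; let `ε → 0`.
-/

noncomputable section

open MeasureTheory Set Function Filter Topology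
open scoped Interval

def smoothAbs (ε y : ℝ) : ℝ := √(y ^ 2 + ε ^ 2) - ε

def smoothAbsDeriv (ε y : ℝ) : ℝ := y / √(y ^ 2 + ε ^ 2)

section SmoothAbs

variable {ε : ℝ}

lemma smoothAbs_zero (hε : 0 ≤ ε) : smoothAbs ε 0 = 0 := by
  simp [smoothAbs, Real.sqrt_sq hε]

lemma continuous_smoothAbs : Continuous (smoothAbs ε) := by
  unfold smoothAbs
  fun_prop

lemma contDiff_smoothAbs {n : WithTop ℕ∞} (hε : ε ≠ 0) : ContDiff ℝ n (smoothAbs ε) := by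
  have hpos (y : ℝ) : y ^ 2 + ε ^ 2 ≠ 0 := by positivity
  exact ((by fun_prop : ContDiff ℝ n fun y : ℝ => y ^ 2 + ε ^ 2).sqrt hpos).sub contDiff_const

lemma hasDerivAt_smoothAbs (hε : ε ≠ 0) (y : ℝ) :
    HasDerivAt (smoothAbs ε) (smoothAbsDeriv ε y) y := by
  have hsq : HasDerivAt (fun y : ℝ => y ^ 2 + ε ^ 2) (2 * y) y := by
    simpa using (hasDerivAt_pow 2 y).add_const (ε ^ 2)
  have h := (hsq.sqrt (by positivity)).sub_const ε
  rwa [mul_div_mul_left _ _ two_ne_zero] at h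

lemma abs_le_sqrt_sq_add_sq (y ε : ℝ) : |y| ≤ √(y ^ 2 + ε ^ 2) :=
  Real.abs_le_sqrt (by nlinarith)

lemma abs_smoothAbs_sub_abs_le (hε : 0 ≤ ε) (y : ℝ) : |(smoothAbs ε y - |y|)| ≤ ε := by
  have hupper : √(y ^ 2 + ε ^ 2) ≤ |y| + ε :=
    Real.sqrt_le_iff.2 ⟨by positivity, by nlinarith [sq_abs y, abs_nonneg y]⟩
  rw [abs_le, smoothAbs]
  constructor <;> linarith [abs_le_sqrt_sq_add_sq y ε]

lemma abs_smoothAbs_sub_mul_le (hε : 0 < ε) (y : ℝ) :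
    |smoothAbs ε y - y * smoothAbsDeriv ε y| ≤ ε := by
  unfold smoothAbsDeriv
  set s := √(y ^ 2 + ε ^ 2) with hs_def
  have hs : s ^ 2 = y ^ 2 + ε ^ 2 := Real.sq_sqrt (by positivity)
  have hεs : ε ≤ s := (Real.le_sqrt hε.le (by positivity)).2 (by nlinarith)
  have hs0 : 0 < s := hε.trans_le hεs
  have : smoothAbs ε y - y * (y / s) = ε ^ 2 / s - ε := by
    rw [smoothAbs, ← hs_def]
    field_simp
    linear_combination hs
  rw [this, abs_le]
  constructor
  · linarith [div_nonneg (sq_nonneg ε) hs0.le]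
  · linarith [(div_le_iff₀ hs0).2 (by nlinarith : ε ^ 2 ≤ ε * s)]

end SmoothAbs

section PartialDerivatives

variable {E : Type*} [NormedAddCommGroup E] [NormedSpace ℝ E] {f : ℝ → ℝ → E}

lemma DifferentiableAt.hasDerivAt_partial_fst {t x : ℝ}
    (hf : DifferentiableAt ℝ (uncurry f) (t, x)) :
    HasDerivAt (fun s => f s x) (fderiv ℝ (uncurry f) (t, x) (1, 0)) t :=
  hf.hasFDerivAt.comp_hasDerivAt (x := t) (f := fun s => (s, x))
    ((hasDerivAt_id t).prodMk (hasDerivAt_const t x))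

lemma DifferentiableAt.hasDerivAt_partial_snd {t x : ℝ}
    (hf : DifferentiableAt ℝ (uncurry f) (t, x)) :
    HasDerivAt (f t) (fderiv ℝ (uncurry f) (t, x) (0, 1)) x :=
  hf.hasFDerivAt.comp_hasDerivAt (x := x) (f := fun y => (t, y))
    ((hasDerivAt_const x t).prodMk (hasDerivAt_id x))

lemma ContDiff.hasDerivAt_partial_fst (hf : ContDiff ℝ 1 (uncurry f)) (t x : ℝ) :
    HasDerivAt (fun s => f s x) (deriv (fun s => f s x) t) t :=
  (hf.differentiable one_ne_zero (t, x)).hasDerivAt_partial_fst.differentiableAt.hasDerivAt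

lemma ContDiff.hasDerivAt_partial_snd (hf : ContDiff ℝ 1 (uncurry f)) (t x : ℝ) :
    HasDerivAt (f t) (deriv (f t) x) x :=
  (hf.differentiable one_ne_zero (t, x)).hasDerivAt_partial_snd.differentiableAt.hasDerivAt

lemma ContDiff.continuous_partial_fst (hf : ContDiff ℝ 1 (uncurry f)) :
    Continuous fun q : ℝ × ℝ => deriv (fun s => f s q.2) q.1 := by
  have hd := hf.differentiable one_ne_zero
  have : (fun q : ℝ × ℝ => deriv (fun s => f s q.2) q.1) = fun q => fderiv ℝ (uncurry f) q (1, 0) :=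
    funext fun q => (hd q).hasDerivAt_partial_fst.deriv
  rw [this]
  exact (hf.continuous_fderiv one_ne_zero).clm_apply continuous_const

lemma ContDiff.continuous_partial_snd (hf : ContDiff ℝ 1 (uncurry f)) :
    Continuous fun q : ℝ × ℝ => deriv (f q.1) q.2 := by
  have hd := hf.differentiable one_ne_zero
  have : (fun q : ℝ × ℝ => deriv (f q.1) q.2) = fun q => fderiv ℝ (uncurry f) q (0, 1) :=
    funext fun q => (hd q).hasDerivAt_partial_snd.deriv
  rw [this]
  exact (hf.continuous_fderiv one_ne_zero).clm_apply continuous_const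

theorem hasDerivAt_intervalIntegral_of_contDiff [CompleteSpace E]
    (hf : ContDiff ℝ 1 (uncurry f)) (a b t₀ : ℝ) :
    HasDerivAt (fun t => ∫ x in a..b, f t x) (∫ x in a..b, deriv (fun s => f s x) t₀) t₀ := by
  have hcont (t : ℝ) : Continuous (f t) := hf.continuous.comp (Continuous.prodMk_right t)
  obtain ⟨M, hM⟩ := (isCompact_Icc.prod isCompact_uIcc).exists_bound_of_continuousOn
    (s := Icc (t₀ - 1) (t₀ + 1) ×ˢ [[a, b]]) hf.continuous_partial_fst.continuousOn
  refine (intervalIntegral.hasDerivAt_integral_of_dominated_loc_of_deriv_le (bound := fun _ => M)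
    (Metric.ball_mem_nhds t₀ one_pos) (Eventually.of_forall fun t => (hcont t).aestronglyMeasurable)
    ((hcont t₀).intervalIntegrable a b)
    (hf.continuous_partial_fst.comp (Continuous.prodMk_right t₀)).aestronglyMeasurable
    (ae_of_all _ fun x hx t ht => hM (t, x) ⟨?_, uIoc_subset_uIcc hx⟩) intervalIntegrable_const
    (ae_of_all _ fun x _ t _ => hf.hasDerivAt_partial_fst t x)).2
  rw [Metric.mem_ball, Real.dist_eq, abs_lt] at ht
  constructor <;> linarith

end PartialDerivatives

lemma eq_of_forall_abs_sub_le_mul {a b K : ℝ} (h : ∀ ε > 0, |a - b| ≤ K * ε) : a = b := by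
  have hlim : Tendsto (fun ε => K * ε) (𝓝[>] 0) (𝓝 0) :=
    ((continuous_const_mul K).tendsto' 0 0 (mul_zero K)).mono_left nhdsWithin_le_nhds
  exact sub_eq_zero.1 (abs_nonpos_iff.1 (ge_of_tendsto hlim (eventually_nhdsWithin_of_forall h)))

lemma abs_integral_smoothAbs_sub_integral_abs_le {ε R : ℝ} {g : ℝ → ℝ} (hg : Continuous g)
    (hε : 0 ≤ ε) (hsupp : ∀ x, R ≤ |x| → g x = 0) :
    |(∫ x in -R..R, smoothAbs ε (g x)) - (∫ x, |g x|)| ≤ ε * |R - -R| := by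
  have hsub : support (fun x => |g x|) ⊆ Ioc (-R) R := fun x hx =>
    Ioo_subset_Ioc_self (abs_lt.1 (not_le.1 fun h => hx (by simp [hsupp x h])))
  have hint : IntervalIntegrable (fun x => smoothAbs ε (g x)) volume (-R) R :=
    (continuous_smoothAbs.comp hg).intervalIntegrable _ _
  rw [← intervalIntegral.integral_eq_integral_of_support_subset hsub,
    ← intervalIntegral.integral_sub hint (hg.abs.intervalIntegrable _ _)]
  exact intervalIntegral.norm_integral_le_of_norm_le_const
    (f := fun x => smoothAbs ε (g x) - |g x|) fun x _ => abs_smoothAbs_sub_abs_le hε (g x)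

section ContinuityEquation

variable {u v : ℝ → ℝ → ℝ} {ε : ℝ}
  (hu : ContDiff ℝ 1 (uncurry u)) (hv : ContDiff ℝ 1 (uncurry v)) (hε : 0 < ε)
include hu hv hε

lemma deriv_smoothAbs_eq_neg_deriv_add {t x : ℝ}
    (hlin : deriv (fun s => v s x) t + deriv (fun y => u t y * v t y) x = 0) :
    deriv (fun s => smoothAbs ε (v s x)) t =
      -deriv (fun y => u t y * smoothAbs ε (v t y)) x +
        deriv (u t) x * (smoothAbs ε (v t x) - v t x * smoothAbsDeriv ε (v t x)) := by
  have hdu := hu.hasDerivAt_partial_snd t x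
  have hdv := hv.hasDerivAt_partial_snd t x
  have hduv : HasDerivAt (fun y => u t y * v t y)
      (deriv (u t) x * v t x + u t x * deriv (v t) x) x := hdu.mul hdv
  have hdηv : HasDerivAt (fun s => smoothAbs ε (v s x))
      (smoothAbsDeriv ε (v t x) * deriv (fun s => v s x) t) t :=
    (hasDerivAt_smoothAbs hε.ne' _).comp t (hv.hasDerivAt_partial_fst t x)
  have hduηv : HasDerivAt (fun y => u t y * smoothAbs ε (v t y))
      (deriv (u t) x * smoothAbs ε (v t x) + u t x * (smoothAbsDeriv ε (v t x) * deriv (v t) x)) x :=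
    hdu.mul ((hasDerivAt_smoothAbs hε.ne' _).comp x hdv)
  rw [hduv.deriv] at hlin
  rw [hdηv.deriv, hduηv.deriv]
  linear_combination smoothAbsDeriv ε (v t x) * hlin

lemma integral_deriv_smoothAbs_eq {t R : ℝ} (hvR : v t R = 0) (hvR' : v t (-R) = 0)
    (hlin : ∀ x, deriv (fun s => v s x) t + deriv (fun y => u t y * v t y) x = 0) :
    ∫ x in -R..R, deriv (fun s => smoothAbs ε (v s x)) t =
      ∫ x in -R..R, deriv (u t) x * (smoothAbs ε (v t x) - v t x * smoothAbsDeriv ε (v t x)) := by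
  have hηv : ContDiff ℝ 1 (uncurry fun t x => smoothAbs ε (v t x)) :=
    (contDiff_smoothAbs hε.ne').comp hv
  have huηv : ContDiff ℝ 1 (uncurry fun t x => u t x * smoothAbs ε (v t x)) := hu.mul hηv
  have hflux : ∫ x in -R..R, deriv (fun y => u t y * smoothAbs ε (v t y)) x = 0 := by
    rw [intervalIntegral.integral_deriv_eq_sub
      (fun x _ => (huηv.hasDerivAt_partial_snd t x).differentiableAt)
      ((huηv.continuous_partial_snd.comp (Continuous.prodMk_right t)).intervalIntegrable _ _),
      hvR, hvR', smoothAbs_zero hε.le, mul_zero, mul_zero, sub_zero]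
  calc ∫ x in -R..R, deriv (fun s => smoothAbs ε (v s x)) t
      = (∫ x in -R..R, deriv (fun s => smoothAbs ε (v s x)) t) +
          ∫ x in -R..R, deriv (fun y => u t y * smoothAbs ε (v t y)) x := by
        rw [hflux, add_zero]
    _ = ∫ x in -R..R, (deriv (fun s => smoothAbs ε (v s x)) t +
          deriv (fun y => u t y * smoothAbs ε (v t y)) x) :=
        (intervalIntegral.integral_add
          ((hηv.continuous_partial_fst.comp (Continuous.prodMk_right t)).intervalIntegrable _ _)
          ((huηv.continuous_partial_snd.comp (Continuous.prodMk_right t)).intervalIntegrable _ _)).symm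
    _ = _ := intervalIntegral.integral_congr fun x _ => by
        simp only [deriv_smoothAbs_eq_neg_deriv_add hu hv hε (hlin x)]
        ring

lemma abs_integral_deriv_smoothAbs_le {t R C : ℝ} (hC : ∀ x ∈ [[-R, R]], |deriv (u t) x| ≤ C)
    (hvR : v t R = 0) (hvR' : v t (-R) = 0)
    (hlin : ∀ x, deriv (fun s => v s x) t + deriv (fun y => u t y * v t y) x = 0) :
    |∫ x in -R..R, deriv (fun s => smoothAbs ε (v s x)) t| ≤ C * ε * |R - -R| := by
  rw [integral_deriv_smoothAbs_eq hu hv hε hvR hvR' hlin]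
  refine intervalIntegral.norm_integral_le_of_norm_le_const
    (f := fun x => deriv (u t) x * (smoothAbs ε (v t x) - v t x * smoothAbsDeriv ε (v t x)))
    fun x hx => ?_
  have hCx := hC x (uIoc_subset_uIcc hx)
  rw [Real.norm_eq_abs, abs_mul]
  exact mul_le_mul hCx (abs_smoothAbs_sub_mul_le hε _) (abs_nonneg _) ((abs_nonneg _).trans hCx)

end ContinuityEquation

theorem integral_abs_eq_of_continuity_equation {u v : ℝ → ℝ → ℝ} {T R : ℝ} (hT : 0 ≤ T)
    (hu : ContDiff ℝ 1 (uncurry u)) (hv : ContDiff ℝ 1 (uncurry v))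
    (hsupp : ∀ t ∈ Icc 0 T, ∀ x, R ≤ |x| → v t x = 0)
    (hlin : ∀ t ∈ Icc 0 T, ∀ x,
      deriv (fun s => v s x) t + deriv (fun y => u t y * v t y) x = 0) :
    ∫ x, |v T x| = ∫ x, |v 0 x| := by
  obtain ⟨C, hC⟩ := (isCompact_Icc.prod isCompact_uIcc).exists_bound_of_continuousOn
    (s := Icc 0 T ×ˢ [[-R, R]]) hu.continuous_partial_snd.continuousOn
  have hT₀ : (0 : ℝ) ∈ Icc 0 T := ⟨le_rfl, hT⟩
  have hTT : T ∈ Icc 0 T := ⟨hT, le_rfl⟩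
  refine eq_of_forall_abs_sub_le_mul (K := 2 * |R - -R| + C * |R - -R| * T) fun ε hε => ?_
  set F : ℝ → ℝ := fun t => ∫ x in -R..R, smoothAbs ε (v t x)
  have hF (t : ℝ) (ht : t ∈ Icc 0 T) : |F t - (∫ x, |v t x|)| ≤ ε * |R - -R| :=
    abs_integral_smoothAbs_sub_integral_abs_le (hv.continuous.comp (Continuous.prodMk_right t))
      hε.le (hsupp t ht)
  have hFT : |F T - F 0| ≤ C * ε * |R - -R| * T := by
    have := (convex_Icc 0 T).norm_image_sub_le_of_norm_hasDerivWithin_le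
      (fun t _ => (hasDerivAt_intervalIntegral_of_contDiff (f := fun t x => smoothAbs ε (v t x))
        ((contDiff_smoothAbs hε.ne').comp hv) (-R) R t).hasDerivWithinAt)
      (fun t ht => abs_integral_deriv_smoothAbs_le hu hv hε (fun x hx => hC (t, x) ⟨ht, hx⟩)
        (hsupp t ht R (le_abs_self R)) (hsupp t ht (-R) (abs_neg R ▸ le_abs_self R)) (hlin t ht))
      hT₀ hTT
    rwa [Real.norm_eq_abs, Real.norm_eq_abs, sub_zero, abs_of_nonneg hT] at this
  calc |(∫ x, |v T x|) - (∫ x, |v 0 x|)|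
      ≤ |F T - (∫ x, |v T x|)| + |F T - F 0| + |F 0 - (∫ x, |v 0 x|)| := by
        have := abs_add_three ((∫ x, |v T x|) - F T) (F T - F 0) (F 0 - ∫ x, |v 0 x|)
        rwa [sub_add_sub_cancel, sub_add_sub_cancel, abs_sub_comm _ (F T)] at this
    _ ≤ ε * |R - -R| + C * ε * |R - -R| * T + ε * |R - -R| := by
        gcongr
        exacts [hF T hTT, hF 0 hT₀]
    _ = (2 * |R - -R| + C * |R - -R| * T) * ε := by ring

theorem stmt14_general (T : ℝ) (hT : 0 < T) (u : ℝ → ℝ → ℝ)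
    (hu : ContDiff ℝ 1 fun q : ℝ × ℝ => u q.1 q.2)
    (v : ℝ → ℝ → ℝ) (hv : ContDiff ℝ 1 fun q : ℝ × ℝ => v q.1 q.2)
    (R : ℝ) (hsupp : ∀ t ∈ Icc 0 T, ∀ x : ℝ, R ≤ |x| → v t x = 0)
    (hlin : ∀ t ∈ Icc 0 T, ∀ x : ℝ,
      deriv (fun s => v s x) t + deriv (fun y => u t y * v t y) x = 0) :
    ∫ x : ℝ, |v T x| = ∫ x : ℝ, |v 0 x| :=
  integral_abs_eq_of_continuity_equation hT.le hu hv hsupp hlin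

/-- (Uniform `L¹` stability of the linearized Burgers equation.)
Let `u` be a bounded C¹ solution of the Burgers equation `∂ₜu + u ∂ₓu = 0` on `[0,T] × ℝ`
with bounded `∂ₓu`, and let `v` be a C¹, uniformly compactly supported solution of the
linearized Burgers equation `∂ₜv + ∂ₓ(uv) = 0`.  Then the `L¹` norm of `v` is conserved:
`∫ |v(T,x)| dx = ∫ |v(0,x)| dx`.  (Hence `ρ_B(T) = 1` up to shock formation.) -/
theorem stmt14 (T : ℝ) (hT : 0 < T) (u : ℝ → ℝ → ℝ)
    (hu : ContDiff ℝ 1 fun q : ℝ × ℝ => u q.1 q.2)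
    (hubdd : ∃ C : ℝ, ∀ t ∈ Icc 0 T, ∀ x : ℝ, |u t x| ≤ C ∧ |deriv (u t) x| ≤ C)
    (hburgers : ∀ t ∈ Icc 0 T, ∀ x : ℝ,
      deriv (fun s => u s x) t + u t x * deriv (u t) x = 0)
    (v : ℝ → ℝ → ℝ) (hv : ContDiff ℝ 1 fun q : ℝ × ℝ => v q.1 q.2)
    (R : ℝ) (hR : 0 < R) (hsupp : ∀ t ∈ Icc 0 T, ∀ x : ℝ, R ≤ |x| → v t x = 0)
    (hlin : ∀ t ∈ Icc 0 T, ∀ x : ℝ,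
      deriv (fun s => v s x) t + deriv (fun y => u t y * v t y) x = 0) :
    ∫ x : ℝ, |v T x| = ∫ x : ℝ, |v 0 x| :=
  stmt14_general T hT u hu v hv R hsupp hlin
end
end

section
/- Let ε>0, let S : ℝ³ → ℝ be C², let φ : ℝ³ → ℝ and b : ℝ³ → ℝ³ be C¹. Set ξ := ∇S and assume ξ(x) ≠ 0 and ⟨ξ(x), b(x)⟩ = 0 for every x ∈ ℝ³. Define the ℂ³-valued vector field A(x) := ε φ(x) e^{iS(x)/ε} (ξ(x) × b(x)) / |ξ(x)|². Then for every x ∈ ℝ³, curl A(x) = −i φ(x) b(x) e^{iS(x)/ε} + ε e^{iS(x)/ε} · curl( φ (ξ×b)/|ξ|² )(x). In particular, the leading-order term of curl A as ε → 0 is the divergence-free WKB velocity profile ∓ i φ b e^{iS/ε}, with remainder of size O(ε). -/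
noncomputable section

open MeasureTheory Set
open scoped RealInnerProductSpace ENNReal

/-- The partial derivative `∂ⱼ Wᵢ (x)` of a `ℂ³`-valued field on `ℝ³` (componentwise on
real and imaginary parts, i.e. the real Fréchet derivative of the `ℂ`-valued component). -/
def pdC3 (W : E3 → Fin 3 → ℂ) (j i : Fin 3) (x : E3) : ℂ :=
  fderiv ℝ (fun y => W y i) x (e3 j)

/-- The curl of a `ℂ³`-valued field on `ℝ³`, componentwise. -/
def curlC3 (W : E3 → Fin 3 → ℂ) (x : E3) : Fin 3 → ℂ :=
  ![pdC3 W 1 2 x - pdC3 W 2 1 x, pdC3 W 2 0 x - pdC3 W 0 2 x, pdC3 W 0 1 x - pdC3 W 1 0 x]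

/-!
By the product rule, `curl (g W) = ∇g × W + g curl W` for a scalar `g` and a vector field `W`.
With `g = ε e^{iS/ε}` one has `∇g = i e^{iS/ε} ξ`, the factor `ε` cancelling the `1/ε` of
the phase, and `ξ × (φ (ξ × b) / |ξ|²) = -φ b` by `ξ × (ξ × b) = ⟨ξ, b⟩ ξ - |ξ|² b` and `⟨ξ, b⟩ = 0`.
-/

theorem cross3_cross3_self (a b : E3) :
    cross3 a (cross3 a b) = ⟪a, b⟫ • a - ‖a‖ ^ 2 • b := by
  ext i
  fin_cases i <;>
    simp [cross3, PiLp.inner_apply, EuclideanSpace.real_norm_sq_eq, Fin.sum_univ_three] <;> ring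

theorem cross3_smul_right (a b : E3) (c : ℝ) : cross3 a (c • b) = c • cross3 a b := by
  ext i
  fin_cases i <;> simp [cross3] <;> ring

theorem cross3_div_normSq_smul_cross3 {a b : E3} (ha : a ≠ 0) (hab : ⟪a, b⟫ = 0) (c : ℝ) :
    cross3 a ((c / ‖a‖ ^ 2) • cross3 a b) = -(c • b) := by
  have ha2 : ‖a‖ ^ 2 ≠ 0 := by positivity
  rw [cross3_smul_right, cross3_cross3_self, hab, zero_smul, zero_sub, smul_neg, smul_smul,
    div_mul_cancel₀ c ha2]

theorem DifferentiableAt.cross3 {f g : E3 → E3} {x : E3} (hf : DifferentiableAt ℝ f x)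
    (hg : DifferentiableAt ℝ g x) : DifferentiableAt ℝ (fun y => cross3 (f y) (g y)) x := by
  have hf' := differentiableAt_euclidean.mp hf
  have hg' := differentiableAt_euclidean.mp hg
  refine differentiableAt_euclidean.mpr fun i => ?_
  fin_cases i <;> simp [_root_.cross3] <;> fun_prop

theorem fderiv_component_apply_e3 {W : E3 → E3} {x : E3} (hW : DifferentiableAt ℝ W x)
    (j k : Fin 3) : fderiv ℝ (fun y => W y k) x (e3 j) = pd3 W j k x := by
  have := ((EuclideanSpace.proj k : E3 →L[ℝ] ℝ).hasFDerivAt.comp x hW.hasFDerivAt).fderiv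
  exact congrArg (· (e3 j)) this

theorem pdC3_mul_ofReal {g : E3 → ℂ} {g' : E3 →L[ℝ] ℂ} {W : E3 → E3} {x : E3}
    (hg : HasFDerivAt g g' x) (hW : DifferentiableAt ℝ W x) (j k : Fin 3) :
    pdC3 (fun y k => g y * (W y k : ℂ)) j k x = g' (e3 j) * W x k + g x * pd3 W j k x := by
  have hWk : HasFDerivAt (fun y => (W y k : ℂ))
      (Complex.ofRealCLM.comp (fderiv ℝ (fun y => W y k) x)) x :=
    Complex.ofRealCLM.hasFDerivAt.comp x
      (differentiableAt_euclidean.mp hW k).hasFDerivAt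
  rw [pdC3, (hg.fun_mul hWk).fderiv]
  simp only [add_apply, smul_apply,
    ContinuousLinearMap.comp_apply, fderiv_component_apply_e3 hW, Complex.ofRealCLM_apply,
    smul_eq_mul]
  ring

theorem curlC3_mul_ofReal {g : E3 → ℂ} {c : ℂ} {ξ : E3} {W : E3 → E3} {x : E3}
    (hg : HasFDerivAt g (c • Complex.ofRealCLM.comp (InnerProductSpace.toDual ℝ E3 ξ)) x)
    (hW : DifferentiableAt ℝ W x) (i : Fin 3) :
    curlC3 (fun y k => g y * (W y k : ℂ)) x i
      = c * (cross3 ξ (W x) i : ℂ) + g x * (curl3 W x i : ℂ) := by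
  fin_cases i <;>
    simp [curlC3, curl3, cross3, pdC3_mul_ofReal hg hW, e3, EuclideanSpace.inner_single_right] <;>
    ring

theorem hasFDerivAt_ofReal_mul_cexp_phase {ε : ℝ} (hε : ε ≠ 0) {S : E3 → ℝ} {ξ x : E3}
    (hS : HasGradientAt S ξ x) :
    HasFDerivAt (fun y => (ε : ℂ) * Complex.exp (Complex.I * (S y : ℂ) / (ε : ℂ)))
      ((Complex.exp (Complex.I * (S x : ℂ) / (ε : ℂ)) * Complex.I) •
        Complex.ofRealCLM.comp (InnerProductSpace.toDual ℝ E3 ξ)) x := by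
  have hSc := Complex.ofRealCLM.hasFDerivAt.comp x (hasGradientAt_iff_hasFDerivAt.mp hS)
  have hε' : (ε : ℂ) ≠ 0 := by exact_mod_cast hε
  have h := (hSc.const_mul (Complex.I / ε)).cexp.const_mul (ε : ℂ)
  simp only [Function.comp_apply, Complex.ofRealCLM_apply, ← mul_div_right_comm] at h
  rwa [smul_smul, smul_smul, mul_comm (ε : ℂ), mul_assoc, mul_div_cancel₀ _ hε'] at h

theorem ContDiff.differentiable_gradient {F : Type*} [NormedAddCommGroup F]
    [InnerProductSpace ℝ F] [CompleteSpace F] {S : F → ℝ} (hS : ContDiff ℝ 2 S) :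
    Differentiable ℝ (gradient S) :=
  (InnerProductSpace.toDual ℝ F).symm.differentiable.comp
    ((hS.fderiv_right (m := 1) (by norm_num)).differentiable one_ne_zero)

/-- (Key identity of the WKB construction.)  Let `ε > 0`, `S` C²,
`φ`, `b` C¹, `ξ := ∇S` with `ξ(x) ≠ 0` and `⟨ξ(x), b(x)⟩ = 0` everywhere, and set
`A := ε φ e^{iS/ε} (ξ × b)/|ξ|²`.  Then
`curl A = −i φ b e^{iS/ε} + ε e^{iS/ε} curl(φ (ξ×b)/|ξ|²)`: the leading-order term of
`curl A` as `ε → 0` is the divergence-free WKB velocity profile, with `O(ε)` remainder. -/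
theorem stmt17 (ε : ℝ) (hε : 0 < ε) (S : E3 → ℝ) (hS : ContDiff ℝ 2 S)
    (φ : E3 → ℝ) (hφ : ContDiff ℝ 1 φ) (b : E3 → E3) (hb : ContDiff ℝ 1 b)
    (hξ : ∀ x : E3, gradient S x ≠ 0)
    (horth : ∀ x : E3, ⟪gradient S x, b x⟫ = 0) :
    ∀ (x : E3) (i : Fin 3),
      curlC3 (fun y j => (ε : ℂ) * Complex.exp (Complex.I * (S y : ℂ) / (ε : ℂ)) *
          ((((φ y / ‖gradient S y‖ ^ 2) • cross3 (gradient S y) (b y)) j : ℝ) : ℂ)) x i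
        = -Complex.I * (φ x : ℂ) * Complex.exp (Complex.I * (S x : ℂ) / (ε : ℂ))
            * ((b x i : ℝ) : ℂ)
          + (ε : ℂ) * Complex.exp (Complex.I * (S x : ℂ) / (ε : ℂ)) *
            ((curl3 (fun y => (φ y / ‖gradient S y‖ ^ 2) •
                cross3 (gradient S y) (b y)) x i : ℝ) : ℂ) := by
  intro x i
  have hgrad := hS.differentiable_gradient
  have hW : DifferentiableAt ℝ
      (fun y => (φ y / ‖gradient S y‖ ^ 2) • cross3 (gradient S y) (b y)) x := by
    simp only [div_eq_mul_inv]
    exact ((hφ.differentiable one_ne_zero x).fun_mul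
      (((hgrad x).norm_sq ℝ).fun_inv (by simpa using hξ x))).fun_smul
      ((hgrad x).cross3 (hb.differentiable one_ne_zero x))
  have hphase := hasFDerivAt_ofReal_mul_cexp_phase hε.ne'
    (hS.differentiable (by norm_num) x).hasGradientAt
  rw [curlC3_mul_ofReal hphase hW, cross3_div_normSq_smul_cross3 (hξ x) (horth x)]
  simp only [PiLp.neg_apply, PiLp.smul_apply, smul_eq_mul, Complex.ofReal_neg,
    Complex.ofReal_mul]
  ring
end
end
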